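/- arXiv:2403.14824 — 5 statements merged into one kernel-verified Lean document; each statement's English description precedes it below -/
import Mathlib

section
/- A vertex v of a graph G is shedding if and only if there does not exist an independent set S ⊆ N₂(v) that dominates N(v), where N₂(v) is the set of vertices at distance exactly 2 from v. -/
variable {V : Type*}

/-- `S` is an independent set of `G`. -/
def IndepSet (G : SimpleGraph V) (S : Set V) : Prop :=
  ∀ ⦃a⦄, a ∈ S → ∀ ⦃b⦄, b ∈ S → ¬ G.Adj a b

/-- `S` is a maximal independent set of `G`. -/
def MaxIndepSet (G : SimpleGraph V) (S : Set V) : Prop :=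
  IndepSet G S ∧ ∀ T : Set V, IndepSet G T → S ⊆ T → S = T

/-- The closed neighborhood `N[S]` of a set of vertices. -/
def ClosedNbhd (G : SimpleGraph V) (S : Set V) : Set V :=
  S ∪ {u | ∃ s ∈ S, G.Adj s u}

/-- `v` is a shedding vertex of `G`. -/
def Shedding (G : SimpleGraph V) (v : V) : Prop :=
  ∀ S : Set V, S ⊆ (G.neighborSet v ∪ {v})ᶜ → IndepSet G S →
    ∃ u ∈ G.neighborSet v, IndepSet G (S ∪ {u})

/-- `N₂(v)`: vertices at distance exactly 2 from `v`. -/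
def N2 (G : SimpleGraph V) (v : V) : Set V := {u | G.dist v u = 2}

/-- The edge `xy` is relating in `G`. -/
def Relating (G : SimpleGraph V) (x y : V) : Prop :=
  ∃ S : Set V, IndepSet G S ∧ MaxIndepSet G (S ∪ {x}) ∧ MaxIndepSet G (S ∪ {y})

/-- `G` contains a cycle of length `k` as a (not necessarily induced) subgraph. -/
def CycleLen (G : SimpleGraph V) (k : ℕ) : Prop :=
  ∃ f : ZMod k → V, Function.Injective f ∧ ∀ i : ZMod k, G.Adj (f i) (f (i + 1))

namespace SimpleGraph

variable {G : SimpleGraph V} {u v : V}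

lemma dist_eq_two_iff :
    G.dist u v = 2 ↔ u ≠ v ∧ ¬ G.Adj u v ∧ (G.commonNeighbors u v).Nonempty := by
  rw [dist, ENat.toNat_eq_iff two_ne_zero]
  exact edist_eq_two_iff

end SimpleGraph

section

variable {G : SimpleGraph V} {S T : Set V} {u v : V}

lemma IndepSet.mono (hT : IndepSet G T) (hST : S ⊆ T) : IndepSet G S :=
  fun _ ha _ hb => hT (hST ha) (hST hb)

lemma IndepSet.union_singleton_iff (hS : IndepSet G S) :
    IndepSet G (S ∪ {u}) ↔ ∀ s ∈ S, ¬ G.Adj s u := by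
  refine ⟨fun h s hs => h (Or.inl hs) (Or.inr rfl), fun h a ha b hb => ?_⟩
  rcases ha with ha | rfl <;> rcases hb with hb | rfl
  · exact hS ha hb
  · exact h a ha
  · exact fun hab => h b hb hab.symm
  · exact G.irrefl

lemma mem_N2_iff : u ∈ N2 G v ↔ u ∉ G.neighborSet v ∪ {v} ∧ ∃ w, G.Adj v w ∧ G.Adj w u := by
  simp only [N2, Set.mem_ofPred_eq, SimpleGraph.dist_eq_two_iff, Set.mem_union,
    SimpleGraph.mem_neighborSet, Set.mem_singleton_iff, not_or, Set.Nonempty,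
    SimpleGraph.mem_commonNeighbors, ne_comm (a := v)]
  constructor
  · rintro ⟨hne, hnadj, w, hvw, huw⟩
    exact ⟨⟨hnadj, hne⟩, w, hvw, huw.symm⟩
  · rintro ⟨⟨hnadj, hne⟩, w, hvw, hwu⟩
    exact ⟨hne, hnadj, w, hvw, hwu.symm⟩

lemma mem_closedNbhd_inter_N2_iff (hS : S ⊆ (G.neighborSet v ∪ {v})ᶜ)
    (hu : u ∈ G.neighborSet v) :
    u ∈ ClosedNbhd G (S ∩ N2 G v) ↔ ∃ s ∈ S, G.Adj s u := by
  constructor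
  · rintro (⟨-, hu2⟩ | ⟨s, ⟨hs, -⟩, hsu⟩)
    · exact absurd (Or.inl hu) (mem_N2_iff.1 hu2).1
    · exact ⟨s, hs, hsu⟩
  · rintro ⟨s, hs, hsu⟩
    exact Or.inr ⟨s, ⟨hs, mem_N2_iff.2 ⟨hS hs, u, hu, hsu.symm⟩⟩, hsu⟩

/-- Only the part of `S` at distance two from `v` can block the neighbours of `v`. -/
lemma exists_neighbor_indepSet_union_iff (hS : S ⊆ (G.neighborSet v ∪ {v})ᶜ)
    (hSi : IndepSet G S) :
    (∃ u ∈ G.neighborSet v, IndepSet G (S ∪ {u})) ↔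
      ¬ G.neighborSet v ⊆ ClosedNbhd G (S ∩ N2 G v) := by
  simp only [Set.not_subset, hSi.union_singleton_iff]
  refine exists_congr fun u => and_congr_right fun hu => ?_
  simp only [mem_closedNbhd_inter_N2_iff hS hu, not_exists, not_and]

end

theorem shedding_iff_no_dominating_indep_in_N2_general (G : SimpleGraph V) (v : V) :
    Shedding G v ↔
      ¬ ∃ S : Set V, S ⊆ N2 G v ∧ IndepSet G S ∧
        G.neighborSet v ⊆ ClosedNbhd G S := by
  constructor
  · rintro hshed ⟨S, hS2, hSi, hdom⟩
    have hS : S ⊆ (G.neighborSet v ∪ {v})ᶜ := fun s hs => (mem_N2_iff.1 (hS2 hs)).1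
    refine (exists_neighbor_indepSet_union_iff hS hSi).1 (hshed S hS hSi) ?_
    rwa [Set.inter_eq_left.2 hS2]
  · intro hno S hS hSi
    exact (exists_neighbor_indepSet_union_iff hS hSi).2 fun hdom =>
      hno ⟨S ∩ N2 G v, Set.inter_subset_right, hSi.mono Set.inter_subset_left, hdom⟩

theorem shedding_iff_no_dominating_indep_in_N2 [Fintype V] (G : SimpleGraph V) (v : V) :
    Shedding G v ↔
      ¬ ∃ S : Set V, S ⊆ N2 G v ∧ IndepSet G S ∧
        G.neighborSet v ⊆ ClosedNbhd G S :=
  shedding_iff_no_dominating_indep_in_N2_general G v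
end

section
/- Let G be a well-covered graph with no isolated vertices. Then G belongs to the class W₂ if and only if every vertex of G is a shedding vertex. -/
/-!
Shedding vertices are exactly what lets a pair of disjoint independent sets grow without
colliding: if the only vertex `w` that could be added to `A` already lies in `B`, a neighbour
of `w` can be added to `A` instead, and it avoids `B` because `B` is independent. Hence a
disjoint independent pair of maximal total size consists of two maximal, and by
well-coveredness maximum, independent sets. Conversely, given `S` missing `N[v]`, extend the
disjoint pair `{v}`, `S` to maximum independent sets `A' ∋ v` and `B' ⊇ S`; since `B'` is
maximum and misses `v`, some neighbour of `v` lies in `B'`, and it can be added to `S`.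
-/

variable {V : Type*}

/-- `S` is a maximum independent set of `G`. -/
def MaximumIndepSet (G : SimpleGraph V) (S : Set V) : Prop :=
  IndepSet G S ∧ ∀ T : Set V, IndepSet G T → T.ncard ≤ S.ncard

variable {G : SimpleGraph V}

/-- The class `W₂` of the paper. -/
def IsW2 (G : SimpleGraph V) : Prop :=
  ∀ A B : Set V, IndepSet G A → IndepSet G B → Disjoint A B →
    ∃ A' B' : Set V, A ⊆ A' ∧ B ⊆ B' ∧ Disjoint A' B' ∧
      MaximumIndepSet G A' ∧ MaximumIndepSet G B'

lemma IndepSet.mono_s5 {A B : Set V} (hB : IndepSet G B) (h : A ⊆ B) : IndepSet G A :=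
  fun _ ha _ hb => hB (h ha) (h hb)

lemma indepSet_insert_iff {S : Set V} {u : V} :
    IndepSet G (insert u S) ↔ IndepSet G S ∧ ∀ s ∈ S, ¬ G.Adj u s := by
  refine ⟨fun h => ⟨h.mono_s5 (Set.subset_insert u S),
    fun s hs => h (Set.mem_insert u S) (Set.mem_insert_of_mem u hs)⟩, ?_⟩
  rintro ⟨hS, hu⟩ a ha b hb
  rcases ha with rfl | ha <;> rcases hb with rfl | hb
  · exact G.irrefl
  · exact hu b hb
  · exact fun hab => hu a ha hab.symm
  · exact hS ha hb

lemma IndepSet.exists_insert_of_not_maxIndepSet {A : Set V} (hA : IndepSet G A)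
    (hmax : ¬ MaxIndepSet G A) : ∃ w ∉ A, IndepSet G (insert w A) := by
  obtain ⟨T, hT, hAT, hne⟩ : ∃ T, IndepSet G T ∧ A ⊆ T ∧ A ≠ T := by
    simpa [MaxIndepSet, hA] using hmax
  obtain ⟨w, hwT, hwA⟩ := Set.exists_of_ssubset (hAT.ssubset_of_ne hne)
  exact ⟨w, hwA, hT.mono_s5 (Set.insert_subset hwT hAT)⟩

lemma Shedding.exists_adj_insert {v : V} {S : Set V} (hv : Shedding G v) (hvS : v ∉ S)
    (hS : IndepSet G (insert v S)) : ∃ u, G.Adj v u ∧ IndepSet G (insert u S) := by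
  have hSv : S ⊆ (G.neighborSet v ∪ {v})ᶜ := by
    rintro s hs (hadj | rfl)
    · exact (indepSet_insert_iff.mp hS).2 s hs hadj
    · exact hvS hs
  obtain ⟨u, hu, hSu⟩ := hv S hSv (hS.mono_s5 (Set.subset_insert v S))
  exact ⟨u, hu, by rwa [Set.union_singleton] at hSu⟩

lemma exists_insert_notMem_of_forall_shedding (hshed : ∀ v, Shedding G v) {A B : Set V}
    (hA : IndepSet G A) (hB : IndepSet G B) (hmax : ¬ MaxIndepSet G A) :
    ∃ u ∉ A, u ∉ B ∧ IndepSet G (insert u A) := by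
  obtain ⟨w, hwA, hAw⟩ := hA.exists_insert_of_not_maxIndepSet hmax
  by_cases hwB : w ∈ B
  · obtain ⟨u, hwu, hAu⟩ := (hshed w).exists_adj_insert hwA hAw
    refine ⟨u, fun huA => ?_, fun huB => hB hwB huB hwu, hAu⟩
    exact (indepSet_insert_iff.mp hAw).2 u huA hwu
  · exact ⟨w, hwA, hwB, hAw⟩

lemma exists_disjoint_maxIndepSet_of_forall_shedding [Finite V] (hshed : ∀ v, Shedding G v)
    {A B : Set V} (hA : IndepSet G A) (hB : IndepSet G B) (hAB : Disjoint A B) :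
    ∃ A' B' : Set V, A ⊆ A' ∧ B ⊆ B' ∧ Disjoint A' B' ∧
      MaxIndepSet G A' ∧ MaxIndepSet G B' := by
  let P : Set (Set V × Set V) :=
    {p | A ⊆ p.1 ∧ B ⊆ p.2 ∧ Disjoint p.1 p.2 ∧ IndepSet G p.1 ∧ IndepSet G p.2}
  obtain ⟨⟨A', B'⟩, ⟨hAA', hBB', hA'B', hA', hB'⟩, hbest⟩ :=
    P.exists_max_image (fun p => p.1.ncard + p.2.ncard) P.toFinite
      ⟨(A, B), subset_rfl, subset_rfl, hAB, hA, hB⟩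
  refine ⟨A', B', hAA', hBB', hA'B', ?_, ?_⟩
  · by_contra hmax
    obtain ⟨u, huA', huB', hA'u⟩ :=
      exists_insert_notMem_of_forall_shedding hshed hA' hB' hmax
    have := hbest (insert u A', B') ⟨hAA'.trans (Set.subset_insert u A'), hBB',
      Set.disjoint_insert_left.mpr ⟨huB', hA'B'⟩, hA'u, hB'⟩
    simp only [Set.ncard_insert_of_notMem huA' A'.toFinite] at this
    omega
  · by_contra hmax
    obtain ⟨u, huB', huA', hB'u⟩ :=
      exists_insert_notMem_of_forall_shedding hshed hB' hA' hmax
    have := hbest (A', insert u B') ⟨hAA', hBB'.trans (Set.subset_insert u B'),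
      Set.disjoint_insert_right.mpr ⟨huA', hA'B'⟩, hA', hB'u⟩
    simp only [Set.ncard_insert_of_notMem huB' B'.toFinite] at this
    omega

lemma MaximumIndepSet.exists_adj_of_notMem [Finite V] {B : Set V} {v : V}
    (hB : MaximumIndepSet G B) (hvB : v ∉ B) : ∃ u ∈ B, G.Adj v u := by
  by_contra! hnadj
  have hle := hB.2 _ (indepSet_insert_iff.mpr ⟨hB.1, hnadj⟩)
  rw [Set.ncard_insert_of_notMem hvB B.toFinite] at hle
  omega

lemma shedding_of_isW2 [Finite V] (hW2 : IsW2 G) (v : V) : Shedding G v := by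
  intro S hSv hS
  have hvS : v ∉ S := fun h => hSv h (Or.inr rfl)
  have hv : IndepSet G {v} := fun a ha b hb => by
    rw [Set.mem_singleton_iff] at ha hb
    exact ha ▸ hb ▸ G.irrefl
  obtain ⟨A', B', hvA', hSB', hA'B', -, hB'⟩ :=
    hW2 {v} S hv hS (Set.disjoint_singleton_left.mpr hvS)
  obtain ⟨u, huB', hvu⟩ :=
    hB'.exists_adj_of_notMem (Set.disjoint_left.mp hA'B' (hvA' rfl))
  exact ⟨u, hvu, hB'.1.mono_s5 (Set.union_subset hSB' (Set.singleton_subset_iff.mpr huB'))⟩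

lemma isW2_of_forall_shedding [Finite V]
    (hwc : ∀ S : Set V, MaxIndepSet G S → MaximumIndepSet G S)
    (hshed : ∀ v, Shedding G v) : IsW2 G := by
  intro A B hA hB hAB
  obtain ⟨A', B', hAA', hBB', hA'B', hA', hB'⟩ :=
    exists_disjoint_maxIndepSet_of_forall_shedding hshed hA hB hAB
  exact ⟨A', B', hAA', hBB', hA'B', hwc A' hA', hwc B' hB'⟩

theorem w2_iff_all_shedding_general [Fintype V] (G : SimpleGraph V)
    (hwc : ∀ S : Set V, MaxIndepSet G S → MaximumIndepSet G S) :
    (∀ A B : Set V, IndepSet G A → IndepSet G B → Disjoint A B →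
      ∃ A' B' : Set V, A ⊆ A' ∧ B ⊆ B' ∧ Disjoint A' B' ∧
        MaximumIndepSet G A' ∧ MaximumIndepSet G B') ↔
    (∀ v : V, Shedding G v) :=
  ⟨shedding_of_isW2, isW2_of_forall_shedding hwc⟩

theorem w2_iff_all_shedding [Fintype V] (G : SimpleGraph V)
    (hni : ∀ v : V, ∃ u : V, G.Adj v u)
    (hwc : ∀ S : Set V, MaxIndepSet G S → MaximumIndepSet G S) :
    (∀ A B : Set V, IndepSet G A → IndepSet G B → Disjoint A B →
      ∃ A' B' : Set V, A ⊆ A' ∧ B ⊆ B' ∧ Disjoint A' B' ∧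
        MaximumIndepSet G A' ∧ MaximumIndepSet G B') ↔
    (∀ v : V, Shedding G v) :=
  w2_iff_all_shedding_general G hwc
end

section
/- Let G be a graph containing no cycles of lengths 4, 5, or 6 (as subgraphs, not necessarily induced), and let xy ∈ E(G) with N(x) ∩ N(y) = ∅, deg(x) ≥ 2 and deg(y) ≥ 2. Then the edge xy is relating if and only if neither x nor y is a shedding vertex. -/
variable {V : Type*}

lemma cycle4' (G : SimpleGraph V) {a b c d : V} (hab : G.Adj a b) (hbc : G.Adj b c)
    (hcd : G.Adj c d) (hda : G.Adj d a) (hac : a ≠ c) (hbd : b ≠ d) : CycleLen G 4 := by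
  have h1 := G.ne_of_adj hab
  have h2 := G.ne_of_adj hbc
  have h3 := G.ne_of_adj hcd
  have h4 := (G.ne_of_adj hda).symm
  refine ⟨![a,b,c,d], ?_, ?_⟩
  · intro i j hij
    fin_cases i <;> fin_cases j <;>
      first
      | rfl
      | exact absurd hij (by first
          | exact h1 | exact h2 | exact h3 | exact h4 | exact hac | exact hbd
          | exact h1.symm | exact h2.symm | exact h3.symm | exact h4.symm
          | exact hac.symm | exact hbd.symm)
  · intro i
    fin_cases i <;> first | exact hab | exact hbc | exact hcd | exact hda

lemma cycle5' (G : SimpleGraph V) {a b c d e : V} (hab : G.Adj a b) (hbc : G.Adj b c)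
    (hcd : G.Adj c d) (hde : G.Adj d e) (hea : G.Adj e a)
    (hac : a ≠ c) (had : a ≠ d) (hbd : b ≠ d) (hbe : b ≠ e) (hce : c ≠ e) : CycleLen G 5 := by
  have h1 := G.ne_of_adj hab
  have h2 := G.ne_of_adj hbc
  have h3 := G.ne_of_adj hcd
  have h4 := G.ne_of_adj hde
  have h5 := (G.ne_of_adj hea).symm
  refine ⟨![a,b,c,d,e], ?_, ?_⟩
  · intro i j hij
    fin_cases i <;> fin_cases j <;>
      first
      | rfl
      | exact absurd hij (by first
          | exact h1 | exact h2 | exact h3 | exact h4 | exact h5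
          | exact hac | exact had | exact hbd | exact hbe | exact hce
          | exact h1.symm | exact h2.symm | exact h3.symm | exact h4.symm | exact h5.symm
          | exact hac.symm | exact had.symm | exact hbd.symm | exact hbe.symm | exact hce.symm)
  · intro i
    fin_cases i <;> first | exact hab | exact hbc | exact hcd | exact hde | exact hea

lemma cycle6' (G : SimpleGraph V) {a b c d e f : V} (hab : G.Adj a b) (hbc : G.Adj b c)
    (hcd : G.Adj c d) (hde : G.Adj d e) (hef : G.Adj e f) (hfa : G.Adj f a)
    (hac : a ≠ c) (had : a ≠ d) (hae : a ≠ e) (hbd : b ≠ d) (hbe : b ≠ e) (hbf : b ≠ f)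
    (hce : c ≠ e) (hcf : c ≠ f) (hdf : d ≠ f) : CycleLen G 6 := by
  have h1 := G.ne_of_adj hab
  have h2 := G.ne_of_adj hbc
  have h3 := G.ne_of_adj hcd
  have h4 := G.ne_of_adj hde
  have h5 := G.ne_of_adj hef
  have h6 := (G.ne_of_adj hfa).symm
  refine ⟨![a,b,c,d,e,f], ?_, ?_⟩
  · intro i j hij
    fin_cases i <;> fin_cases j <;>
      first
      | rfl
      | exact absurd hij (by first
          | exact h1 | exact h2 | exact h3 | exact h4 | exact h5 | exact h6
          | exact hac | exact had | exact hae | exact hbd | exact hbe | exact hbf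
          | exact hce | exact hcf | exact hdf
          | exact h1.symm | exact h2.symm | exact h3.symm | exact h4.symm | exact h5.symm | exact h6.symm
          | exact hac.symm | exact had.symm | exact hae.symm | exact hbd.symm | exact hbe.symm | exact hbf.symm
          | exact hce.symm | exact hcf.symm | exact hdf.symm)
  · intro i
    fin_cases i <;>
      first | exact hab | exact hbc | exact hcd | exact hde | exact hef | exact hfa

/-- Extend an independent set inside `W` to one maximal inside `W`. -/
lemma exists_max_extension [Fintype V] (G : SimpleGraph V) {C W : Set V}
    (hCW : C ⊆ W) (hC : IndepSet G C) :
    ∃ S : Set V, C ⊆ S ∧ S ⊆ W ∧ IndepSet G S ∧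
      ∀ v ∈ W, v ∉ S → ¬ IndepSet G (S ∪ {v}) := by
  classical
  have hfin : ({S : Set V | C ⊆ S ∧ S ⊆ W ∧ IndepSet G S}).Finite := Set.toFinite _
  obtain ⟨S, hSP, hmax⟩ := Set.Finite.exists_maximalFor id _ hfin
    ⟨C, subset_refl _, hCW, hC⟩
  refine ⟨S, hSP.1, hSP.2.1, hSP.2.2, ?_⟩
  intro v hvW hvS hind
  have hmem : (S ∪ {v}) ∈ {S : Set V | C ⊆ S ∧ S ⊆ W ∧ IndepSet G S} := by
    refine ⟨hSP.1.trans Set.subset_union_left, ?_, hind⟩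
    rintro a (ha | ha)
    · exact hSP.2.1 ha
    · rwa [Set.mem_singleton_iff.mp ha]
  have heq := hmax hmem Set.subset_union_left
  simp only [id_eq] at heq
  have : v ∈ S := heq (Set.mem_union_right _ rfl)
  exact hvS this

/-- One half of the forward direction. -/
lemma aux_forward [Fintype V] (G : SimpleGraph V) (h5 : ¬ CycleLen G 5)
    (x y : V) (hxy : G.Adj x y)
    (hN : G.neighborSet x ∩ G.neighborSet y = ∅)
    (hdy : 2 ≤ (G.neighborSet y).ncard)
    (S : Set V) (hS : IndepSet G S)
    (hSx : MaxIndepSet G (S ∪ {x})) (hSy : MaxIndepSet G (S ∪ {y})) :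
    ¬ Shedding G x := by
  classical
  have hNx : ∀ u, u ∈ G.neighborSet x → u ∉ G.neighborSet y := by
    intro u h1 h2
    exact Set.eq_empty_iff_forall_notMem.mp hN u ⟨h1, h2⟩
  have hxS : x ∉ S := fun h =>
    hSy.1 (Set.mem_union_left _ h) (Set.mem_union_right _ rfl) hxy
  have hyS : y ∉ S := fun h =>
    hSx.1 (Set.mem_union_left _ h) (Set.mem_union_right _ rfl) hxy.symm
  have hSnx : ∀ s ∈ S, ¬ G.Adj x s := fun s hs =>
    hSx.1 (Set.mem_union_right _ rfl) (Set.mem_union_left _ hs)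
  have hSny : ∀ s ∈ S, ¬ G.Adj y s := fun s hs =>
    hSy.1 (Set.mem_union_right _ rfl) (Set.mem_union_left _ hs)
  -- every neighbor of x other than y is dominated by S
  have domx : ∀ u, u ∈ G.neighborSet x → u ≠ y → ∃ s ∈ S, G.Adj u s := by
    intro u hu huy
    by_contra hcon
    push_neg at hcon
    have huS : u ∉ S := fun h => hSnx u h hu
    have hind : IndepSet G (S ∪ {y} ∪ {u}) := by
      rintro a (ha | ha) b (hb | hb)
      · exact hSy.1 ha hb
      · rw [Set.mem_singleton_iff.mp hb]
        rcases ha with ha | ha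
        · exact fun h => hcon a ha h.symm
        · rw [Set.mem_singleton_iff.mp ha]
          exact fun h => hNx u hu h
      · rw [Set.mem_singleton_iff.mp ha]
        rcases hb with hb | hb
        · exact fun h => hcon b hb h
        · rw [Set.mem_singleton_iff.mp hb]
          exact fun h => hNx u hu h.symm
      · rw [Set.mem_singleton_iff.mp ha, Set.mem_singleton_iff.mp hb]
        exact fun h => G.irrefl h
    have heq := hSy.2 _ hind Set.subset_union_left
    have : u ∈ S ∪ {y} := heq ▸ Set.mem_union_right _ rfl
    rcases this with h | h
    · exact huS h
    · exact huy (Set.mem_singleton_iff.mp h)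
  -- pick a neighbor z of y with z ≠ x
  obtain ⟨z, hz, hzx⟩ := Set.exists_ne_of_one_lt_ncard (s := G.neighborSet y) (by omega) x
  have hznx : z ∉ G.neighborSet x := fun h => hNx z h hz
  -- the witness set
  set T : Set V := (S \ G.neighborSet z) ∪ {z} with hT
  intro hshed
  have hTsub : T ⊆ (G.neighborSet x ∪ {x})ᶜ := by
    rintro a (ha | ha)
    · rintro (h | h)
      · exact hSnx a ha.1 h
      · exact hxS (Set.mem_singleton_iff.mp h ▸ ha.1)
    · rw [Set.mem_singleton_iff.mp ha]
      rintro (h | h)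
      · exact hznx h
      · exact hzx (Set.mem_singleton_iff.mp h)
  have hTind : IndepSet G T := by
    rintro a (ha | ha) b (hb | hb)
    · exact hS ha.1 hb.1
    · rw [Set.mem_singleton_iff.mp hb]
      exact fun h => ha.2 h.symm
    · rw [Set.mem_singleton_iff.mp ha]
      exact fun h => hb.2 h
    · rw [Set.mem_singleton_iff.mp ha, Set.mem_singleton_iff.mp hb]
      exact fun h => G.irrefl h
  obtain ⟨u, hu, huind⟩ := hshed T hTsub hTind
  -- u has a neighbor in T, contradicting huind
  have : ∃ t ∈ T, G.Adj u t := by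
    by_cases huy : u = y
    · exact ⟨z, Set.mem_union_right _ rfl, huy ▸ hz⟩
    · obtain ⟨s, hs, hus⟩ := domx u hu huy
      refine ⟨s, Set.mem_union_left _ ⟨hs, fun hsz => ?_⟩, hus⟩
      -- s ∈ N(z) would give a 5-cycle x u s z y
      refine h5 (cycle5' G hu hus hsz.symm hz.symm hxy.symm ?_ ?_ ?_ ?_ ?_)
      · exact fun h => hxS (h ▸ hs)
      · exact fun h => hzx h.symm
      · exact fun h => hznx (h ▸ hu)
      · exact huy
      · exact fun h => hyS (h ▸ hs)
  obtain ⟨t, ht, hut⟩ := this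
  exact huind (Set.mem_union_right _ rfl) (Set.mem_union_left _ ht) hut

/-- One half of the backward direction: extracting a dominating independent set. -/
lemma not_shedding_witness (G : SimpleGraph V) {v : V} (h : ¬ Shedding G v) :
    ∃ T : Set V, T ⊆ (G.neighborSet v ∪ {v})ᶜ ∧ IndepSet G T ∧
      ∀ u ∈ G.neighborSet v, ∃ t ∈ T, G.Adj u t := by
  unfold Shedding at h
  push_neg at h
  obtain ⟨T, hT1, hT2, hT3⟩ := h
  refine ⟨T, hT1, hT2, fun u hu => ?_⟩
  have := hT3 u hu
  by_contra hcon
  push_neg at hcon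
  apply this
  rintro a (ha | ha) b (hb | hb)
  · exact hT2 ha hb
  · rw [Set.mem_singleton_iff.mp hb]
    exact fun h => hcon a ha h.symm
  · rw [Set.mem_singleton_iff.mp ha]
    exact fun h => hcon b hb h
  · rw [Set.mem_singleton_iff.mp ha, Set.mem_singleton_iff.mp hb]
    exact fun h => G.irrefl h

theorem relating_iff_not_shedding [Fintype V] (G : SimpleGraph V)
    (h4 : ¬ CycleLen G 4) (h5 : ¬ CycleLen G 5) (h6 : ¬ CycleLen G 6)
    (x y : V) (hxy : G.Adj x y)
    (hN : G.neighborSet x ∩ G.neighborSet y = ∅)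
    (hdx : 2 ≤ (G.neighborSet x).ncard) (hdy : 2 ≤ (G.neighborSet y).ncard) :
    Relating G x y ↔ (¬ Shedding G x ∧ ¬ Shedding G y) := by
  classical
  have hNsymm : G.neighborSet y ∩ G.neighborSet x = ∅ := by
    rwa [Set.inter_comm]
  have hNx : ∀ u, u ∈ G.neighborSet x → u ∉ G.neighborSet y := by
    intro u h1 h2
    exact Set.eq_empty_iff_forall_notMem.mp hN u ⟨h1, h2⟩
  constructor
  · rintro ⟨S, hS, hSx, hSy⟩
    exact ⟨aux_forward G h5 x y hxy hN hdy S hS hSx hSy,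
           aux_forward G h5 y x hxy.symm hNsymm hdx S hS hSy hSx⟩
  · rintro ⟨hnsx, hnsy⟩
    obtain ⟨A, hA1, hA2, hA3⟩ := not_shedding_witness G hnsx
    obtain ⟨B, hB1, hB2, hB3⟩ := not_shedding_witness G hnsy
    have hAx : ∀ a ∈ A, a ∉ G.neighborSet x ∧ a ≠ x := by
      intro a ha
      have := hA1 ha
      simp only [Set.mem_compl_iff, Set.mem_union, Set.mem_singleton_iff] at this
      push_neg at this
      exact this
    have hBy : ∀ b ∈ B, b ∉ G.neighborSet y ∧ b ≠ y := by
      intro b hb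
      have := hB1 hb
      simp only [Set.mem_compl_iff, Set.mem_union, Set.mem_singleton_iff] at this
      push_neg at this
      exact this
    -- the two halves of the dominating set
    set C1 : Set V := {a | a ∈ A ∧ ∃ u ∈ G.neighborSet x, u ≠ y ∧ G.Adj u a} with hC1
    set C2 : Set V := {b | b ∈ B ∧ ∃ w ∈ G.neighborSet y, w ≠ x ∧ G.Adj w b} with hC2
    set W : Set V := (G.neighborSet x ∪ G.neighborSet y ∪ {x, y})ᶜ with hW
    -- C1 avoids everything forbidden
    have hC1W : ∀ a ∈ C1, a ∉ G.neighborSet x ∧ a ∉ G.neighborSet y ∧ a ≠ x ∧ a ≠ y := by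
      rintro a ⟨haA, u, hu, huy, hua⟩
      obtain ⟨hax1, hax2⟩ := hAx a haA
      refine ⟨hax1, ?_, hax2, ?_⟩
      · intro hay
        -- 4-cycle x u a y
        exact h4 (cycle4' G hu hua hay.symm hxy.symm hax2.symm huy)
      · intro hay
        exact hNx u hu (hay ▸ hua.symm)
    have hC2W : ∀ b ∈ C2, b ∉ G.neighborSet x ∧ b ∉ G.neighborSet y ∧ b ≠ x ∧ b ≠ y := by
      rintro b ⟨hbB, w, hw, hwx, hwb⟩
      obtain ⟨hbx1, hbx2⟩ := hBy b hbB
      refine ⟨?_, hbx1, ?_, hbx2⟩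
      · intro hbx
        -- 4-cycle y w b x
        exact h4 (cycle4' G hw hwb hbx.symm hxy
          (fun h => (h ▸ hbx2) rfl) hwx)
      · intro hbx
        exact hNx w (hbx ▸ hwb.symm) hw
    have hCW : C1 ∪ C2 ⊆ W := by
      rintro c (hc | hc)
      · obtain ⟨k1, k2, k3, k4⟩ := hC1W c hc
        simp only [hW, Set.mem_compl_iff, Set.mem_union, Set.mem_insert_iff,
          Set.mem_singleton_iff]
        push_neg
        exact ⟨⟨k1, k2⟩, k3, k4⟩
      · obtain ⟨k1, k2, k3, k4⟩ := hC2W c hc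
        simp only [hW, Set.mem_compl_iff, Set.mem_union, Set.mem_insert_iff,
          Set.mem_singleton_iff]
        push_neg
        exact ⟨⟨k1, k2⟩, k3, k4⟩
    -- no edges between C1 and C2 (else 6-cycle)
    have hkey : ∀ a ∈ C1, ∀ b ∈ C2, ¬ G.Adj a b := by
      rintro a ⟨haA, u, hu, huy, hua⟩ b ⟨hbB, w, hw, hwx, hwb⟩ hab
      obtain ⟨ha1, ha2, ha3, ha4⟩ := hC1W a ⟨haA, u, hu, huy, hua⟩
      obtain ⟨hb1, hb2, hb3, hb4⟩ := hC2W b ⟨hbB, w, hw, hwx, hwb⟩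
      -- 6-cycle x u a b w y
      refine h6 (cycle6' G hu hua hab hwb.symm hw.symm hxy.symm
        ?_ ?_ ?_ ?_ ?_ ?_ ?_ ?_ ?_)
      · exact fun h => ha3 h.symm
      · exact fun h => hb3 h.symm
      · exact fun h => hwx h.symm
      · exact fun h => hb1 (h ▸ hu)
      · exact fun h => hNx u hu (h ▸ hw)
      · exact huy
      · exact fun h => ha2 (h ▸ hw)
      · exact fun h => ha4 h
      · exact fun h => hb4 h
    have hCind : IndepSet G (C1 ∪ C2) := by
      rintro a (ha | ha) b (hb | hb)
      · exact hA2 ha.1 hb.1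
      · exact hkey a ha b hb
      · exact fun h => hkey b hb a ha h.symm
      · exact hB2 ha.1 hb.1
    obtain ⟨S, hCS, hSW, hSind, hSmax⟩ := exists_max_extension G hCW hCind
    have hSfacts : ∀ s ∈ S, s ∉ G.neighborSet x ∧ s ∉ G.neighborSet y ∧ s ≠ x ∧ s ≠ y := by
      intro s hs
      have := hSW hs
      simp only [hW, Set.mem_compl_iff, Set.mem_union, Set.mem_insert_iff,
        Set.mem_singleton_iff] at this
      push_neg at this
      exact ⟨this.1.1, this.1.2, this.2.1, this.2.2⟩
    have hxyS : x ∉ S ∧ y ∉ S := by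
      constructor
      · intro h; exact (hSfacts x h).2.2.1 rfl
      · intro h; exact (hSfacts y h).2.2.2 rfl
    have hindx : IndepSet G (S ∪ {x}) := by
      rintro a (ha | ha) b (hb | hb)
      · exact hSind ha hb
      · rw [Set.mem_singleton_iff.mp hb]
        exact fun h => (hSfacts a ha).1 h.symm
      · rw [Set.mem_singleton_iff.mp ha]
        exact fun h => (hSfacts b hb).1 h
      · rw [Set.mem_singleton_iff.mp ha, Set.mem_singleton_iff.mp hb]
        exact fun h => G.irrefl h
    have hindy : IndepSet G (S ∪ {y}) := by
      rintro a (ha | ha) b (hb | hb)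
      · exact hSind ha hb
      · rw [Set.mem_singleton_iff.mp hb]
        exact fun h => (hSfacts a ha).2.1 h.symm
      · rw [Set.mem_singleton_iff.mp ha]
        exact fun h => (hSfacts b hb).2.1 h
      · rw [Set.mem_singleton_iff.mp ha, Set.mem_singleton_iff.mp hb]
        exact fun h => G.irrefl h
    have hmaxx : MaxIndepSet G (S ∪ {x}) := by
      refine ⟨hindx, fun T hT hsub => Set.Subset.antisymm hsub ?_⟩
      intro v hvT
      by_contra hvn
      have hvS : v ∉ S := fun h => hvn (Set.mem_union_left _ h)
      have hvx : v ≠ x := fun h => hvn (Set.mem_union_right _ (h ▸ rfl))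
      have hxT : x ∈ T := hsub (Set.mem_union_right _ rfl)
      have hvnx : ¬ G.Adj x v := fun h => hT hxT hvT h
      have hvny : v ≠ y := fun h => hvnx (h ▸ hxy)
      by_cases hvy : G.Adj y v
      · -- v is a neighbor of y, v ≠ x : dominated by C2 ⊆ S ⊆ T
        obtain ⟨b, hbB, hvb⟩ := hB3 v hvy
        have hbC2 : b ∈ C2 := ⟨hbB, v, hvy, hvx, hvb⟩
        have hbT : b ∈ T := hsub (Set.mem_union_left _ (hCS (Set.mem_union_right _ hbC2)))
        exact hT hvT hbT hvb
      · -- v ∈ W : contradicts maximality of S in W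
        have hvW : v ∈ W := by
          simp only [hW, Set.mem_compl_iff, Set.mem_union, Set.mem_insert_iff,
            Set.mem_singleton_iff]
          push_neg
          exact ⟨⟨hvnx, hvy⟩, hvx, hvny⟩
        refine hSmax v hvW hvS (fun a ha b hb => ?_)
        have haT : a ∈ T := by
          rcases ha with ha | ha
          · exact hsub (Set.mem_union_left _ ha)
          · exact Set.mem_singleton_iff.mp ha ▸ hvT
        have hbT : b ∈ T := by
          rcases hb with hb | hb
          · exact hsub (Set.mem_union_left _ hb)
          · exact Set.mem_singleton_iff.mp hb ▸ hvT
        exact hT haT hbT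
    have hmaxy : MaxIndepSet G (S ∪ {y}) := by
      refine ⟨hindy, fun T hT hsub => Set.Subset.antisymm hsub ?_⟩
      intro v hvT
      by_contra hvn
      have hvS : v ∉ S := fun h => hvn (Set.mem_union_left _ h)
      have hvy : v ≠ y := fun h => hvn (Set.mem_union_right _ (h ▸ rfl))
      have hyT : y ∈ T := hsub (Set.mem_union_right _ rfl)
      have hvny : ¬ G.Adj y v := fun h => hT hyT hvT h
      have hvnx : v ≠ x := fun h => hvny (h ▸ hxy.symm)
      by_cases hvx : G.Adj x v
      · obtain ⟨a, haA, hva⟩ := hA3 v hvx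
        have haC1 : a ∈ C1 := ⟨haA, v, hvx, hvy, hva⟩
        have haT : a ∈ T := hsub (Set.mem_union_left _ (hCS (Set.mem_union_left _ haC1)))
        exact hT hvT haT hva
      · have hvW : v ∈ W := by
          simp only [hW, Set.mem_compl_iff, Set.mem_union, Set.mem_insert_iff,
            Set.mem_singleton_iff]
          push_neg
          exact ⟨⟨hvx, hvny⟩, hvnx, hvy⟩
        refine hSmax v hvW hvS (fun a ha b hb => ?_)
        have haT : a ∈ T := by
          rcases ha with ha | ha
          · exact hsub (Set.mem_union_left _ ha)
          · exact Set.mem_singleton_iff.mp ha ▸ hvT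
        have hbT : b ∈ T := by
          rcases hb with hb | hb
          · exact hsub (Set.mem_union_left _ hb)
          · exact Set.mem_singleton_iff.mp hb ▸ hvT
        exact hT haT hbT
    exact ⟨S, hSind, hmaxx, hmaxy⟩
end

section
/- Let G be a graph, x ∈ V(G), and let G' be obtained from G by adding a new pendant vertex y adjacent only to x. Then the edge xy is relating in G' if and only if there exists an independent set S ⊆ N₂(x) in G that dominates N_G(x) (equivalently, x is not a shedding vertex witnessed within N₂(x)). -/
variable {V : Type*}

/-- The graph obtained from `G` by adding a new pendant vertex (`none`)
adjacent only to `x`. -/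
def addPendant (G : SimpleGraph V) (x : V) : SimpleGraph (Option V) :=
  SimpleGraph.fromRel (fun a b =>
    (∃ u w : V, a = some u ∧ b = some w ∧ G.Adj u w) ∨ (a = none ∧ b = some x))

lemma adj_some_some {G : SimpleGraph V} {x u w : V} :
    (addPendant G x).Adj (some u) (some w) ↔ G.Adj u w := by
  simp only [addPendant, SimpleGraph.fromRel_adj]
  constructor
  · rintro ⟨hne, (⟨a, b, ha, hb, hab⟩ | ⟨h, -⟩) | (⟨a, b, ha, hb, hab⟩ | ⟨h, -⟩)⟩
    · cases ha; cases hb; exact hab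
    · simp at h
    · cases ha; cases hb; exact hab.symm
    · simp at h
  · intro h
    exact ⟨by simpa using h.ne, Or.inl (Or.inl ⟨u, w, rfl, rfl, h⟩)⟩

lemma adj_none_some {G : SimpleGraph V} {x u : V} :
    (addPendant G x).Adj none (some u) ↔ u = x := by
  simp only [addPendant, SimpleGraph.fromRel_adj]
  constructor
  · rintro ⟨hne, (⟨a, b, ha, hb, hab⟩ | ⟨-, h⟩) | (⟨a, b, ha, hb, hab⟩ | ⟨h, -⟩)⟩
    · simp at ha
    · simpa using h
    · simp at hb
    · simp at h
  · rintro rfl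
    exact ⟨by simp, Or.inl (Or.inr (by simp))⟩

lemma adj_some_none {G : SimpleGraph V} {x u : V} :
    (addPendant G x).Adj (some u) none ↔ u = x := by
  rw [SimpleGraph.adj_comm]; exact adj_none_some

lemma max_indep_dominates {W : Type*} {G : SimpleGraph W} {M : Set W}
    (hM : MaxIndepSet G M) {v : W} (hv : v ∉ M) : ∃ m ∈ M, G.Adj m v := by
  by_contra h
  push_neg at h
  have hind : IndepSet G (M ∪ {v}) := by
    rintro a (ha | rfl) b (hb | rfl)
    · exact hM.1 ha hb
    · exact h a ha
    · intro hadj; exact h b hb hadj.symm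
    · exact G.loopless.irrefl _
  have := hM.2 _ hind (Set.subset_union_left)
  exact hv (this ▸ Set.mem_union_right _ rfl)

/-- `xy` is relating in `G' = G + pendant y at x` iff some independent
set `S ⊆ N₂(x)` of `G` dominates `N_G(x)`. -/
theorem pendant_relating_iff [Fintype V] (G : SimpleGraph V) (x : V) :
    Relating (addPendant G x) (some x) none ↔
      ∃ S : Set V, S ⊆ N2 G x ∧ IndepSet G S ∧
        G.neighborSet x ⊆ ClosedNbhd G S := by
  constructor
  · rintro ⟨S, hSind, hSx, hSy⟩
    -- basic facts
    have hxnotS : some x ∉ S := by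
      intro h
      exact hSy.1 (Set.mem_union_left _ h) (Set.mem_union_right _ rfl)
        (adj_some_none.mpr rfl)
    refine ⟨{s | some s ∈ S ∧ G.dist x s = 2}, fun s hs => hs.2, ?_, ?_⟩
    · intro a ha b hb hab
      exact hSx.1 (Set.mem_union_left _ ha.1) (Set.mem_union_left _ hb.1)
        (adj_some_some.mpr hab)
    · intro u hu
      have hu' : G.Adj x u := hu
      have hunotS : some u ∉ S ∪ {none} := by
        rintro (h | h)
        · exact hSx.1 (Set.mem_union_right _ rfl) (Set.mem_union_left _ h)
            (adj_some_some.mpr hu')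
        · simp at h
      obtain ⟨m, hm, hadj⟩ := max_indep_dominates hSy hunotS
      rcases m with _ | s
      · exact absurd (adj_none_some.mp hadj ▸ hu') (G.loopless.irrefl x)
      · rcases hm with hm | hm
        · have hsu : G.Adj s u := adj_some_some.mp hadj
          have hnadj : ¬ G.Adj x s := fun h =>
            hSx.1 (Set.mem_union_right _ rfl) (Set.mem_union_left _ hm)
              (adj_some_some.mpr h)
          have hne : s ≠ x := fun h => hxnotS (h ▸ hm)
          have hdist : G.dist x s = 2 := by
            have hle : G.dist x s ≤ 2 := by
              have := SimpleGraph.dist_le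
                ((hu'.toWalk.append hsu.symm.toWalk) : G.Walk x s)
              simpa using this
            have h0 : G.dist x s ≠ 0 := by
              intro h
              rcases SimpleGraph.dist_eq_zero_iff_eq_or_not_reachable.mp h with
                h' | h'
              · exact hne h'.symm
              · exact h' ⟨hu'.toWalk.append hsu.symm.toWalk⟩
            have h1 : G.dist x s ≠ 1 := fun h =>
              hnadj (SimpleGraph.dist_eq_one_iff_adj.mp h)
            omega
          exact Or.inr ⟨s, ⟨hm, hdist⟩, hsu⟩
        · simp at hm
  · rintro ⟨S, hS2, hSind, hdom⟩
    -- D : vertices not in closed nbhd of x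
    set D : Set V := {v | v ≠ x ∧ ¬ G.Adj x v} with hD
    have hSD : S ⊆ D := by
      intro s hs
      have h2 : G.dist x s = 2 := hS2 hs
      constructor
      · intro h; subst h; rw [SimpleGraph.dist_self] at h2; omega
      · intro h; rw [SimpleGraph.dist_eq_one_iff_adj.mpr h] at h2; omega
    -- maximal independent extension inside D
    obtain ⟨M, hSM, hMmax⟩ := zorn_subset_nonempty
      {T : Set V | T ⊆ D ∧ IndepSet G T}
      (fun c hc hchain hne => by
        refine ⟨⋃₀ c, ⟨?_, ?_⟩, fun s hs => Set.subset_sUnion_of_mem hs⟩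
        · intro v hv
          obtain ⟨T, hT, hvT⟩ := hv
          exact (hc hT).1 hvT
        · intro a ha b hb
          obtain ⟨T, hT, haT⟩ := ha
          obtain ⟨T', hT', hbT⟩ := hb
          rcases hchain.total hT hT' with h | h
          · exact (hc hT').2 (h haT) hbT
          · exact (hc hT).2 haT (h hbT))
      S ⟨hSD, hSind⟩
    obtain ⟨⟨hMD, hMind⟩, hMmax'⟩ := hMmax
    have key : ∀ v ∈ D, (∀ a ∈ M, ¬ G.Adj a v) → v ∈ M := by
      intro v hv hvind
      have : M ∪ {v} ∈ {T : Set V | T ⊆ D ∧ IndepSet G T} := by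
        constructor
        · rintro a (ha | rfl)
          · exact hMD ha
          · exact hv
        · rintro a (ha | rfl) b (hb | rfl)
          · exact hMind ha hb
          · exact hvind a ha
          · intro h; exact hvind b hb h.symm
          · exact G.loopless.irrefl _
      exact hMmax' this Set.subset_union_left (Set.mem_union_right _ rfl)
    refine ⟨some '' M, ?_, ⟨?_, ?_⟩, ⟨?_, ?_⟩⟩
    -- indep of image
    · rintro a ⟨a', ha', rfl⟩ b ⟨b', hb', rfl⟩ hadj
      exact hMind ha' hb' (adj_some_some.mp hadj)
    · rintro a (⟨a', ha', rfl⟩ | rfl) b (⟨b', hb', rfl⟩ | rfl)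
      · exact fun h => hMind ha' hb' (adj_some_some.mp h)
      · exact fun h => (hMD ha').2 (adj_some_some.mp h).symm
      · exact fun h => (hMD hb').2 (adj_some_some.mp h)
      · exact (addPendant G x).loopless.irrefl _
    -- max of M ∪ {x}
    · intro T hT hsub
      refine Set.Subset.antisymm hsub ?_
      rintro (_ | v) ht
      · exact absurd (hT ht (hsub (Set.mem_union_right _ rfl))
          (adj_none_some.mpr rfl)) id
      · by_cases hvx : v = x
        · exact Set.mem_union_right _ (hvx ▸ rfl)
        by_cases hadjv : G.Adj x v
        · exact absurd (adj_some_some.mpr hadjv)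
            (fun h => hT (hsub (Set.mem_union_right _ rfl)) ht h)
        · have hvM : v ∈ M := key v ⟨hvx, hadjv⟩ (fun a ha hadj =>
            hT (hsub (Set.mem_union_left _ ⟨a, ha, rfl⟩)) ht
              (adj_some_some.mpr hadj))
          exact Set.mem_union_left _ ⟨v, hvM, rfl⟩
    -- indep of M ∪ {none}
    · rintro a (⟨a', ha', rfl⟩ | rfl) b (⟨b', hb', rfl⟩ | rfl)
      · exact fun h => hMind ha' hb' (adj_some_some.mp h)
      · exact fun h => (hMD ha').1 (adj_some_none.mp h)
      · exact fun h => (hMD hb').1 (adj_none_some.mp h)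
      · exact (addPendant G x).loopless.irrefl _
    -- max of M ∪ {none}
    · intro T hT hsub
      refine Set.Subset.antisymm hsub ?_
      rintro (_ | v) ht
      · exact Set.mem_union_right _ rfl
      · by_cases hvx : v = x
        · exact absurd (adj_some_none.mpr hvx)
            (fun h => hT ht (hsub (Set.mem_union_right _ rfl)) h)
        by_cases hadjv : G.Adj x v
        · rcases hdom hadjv with hv | ⟨s, hs, hsv⟩
          · exact Set.mem_union_left _ ⟨v, hSM hv, rfl⟩
          · exact absurd (adj_some_some.mpr hsv)
              (fun h => hT (hsub (Set.mem_union_left _ ⟨s, hSM hs, rfl⟩)) ht h)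
        · have hvM : v ∈ M := key v ⟨hvx, hadjv⟩ (fun a ha hadj =>
            hT (hsub (Set.mem_union_left _ ⟨a, ha, rfl⟩)) ht
              (adj_some_some.mpr hadj))
          exact Set.mem_union_left _ ⟨v, hvM, rfl⟩
end

section
/- Let G be a graph, x ∈ V(G), and suppose S ⊆ N₂(x) is an independent set of G dominating N(x). Let S* be any maximal independent set of G ∖ {x} containing S. Then in the graph G' obtained from G by adding a pendant vertex y adjacent only to x, both S* ∪ {x} and S* ∪ {y} are maximal independent sets of G'. -/
variable {V : Type*}

/-! The vertex `x` has no neighbour in `S'`: a neighbour would be dominated by `S ⊆ N₂(x)`, hence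
adjacent to a vertex of `S ⊆ S'`, contradicting independence. So both sets are independent in `G'`,
and any independent superset, with `x` and the pendant vertex removed, is an independent set of
`G ∖ {x}` containing `S'`, hence equal to `S'`. -/

section addPendant

variable (G : SimpleGraph V) (x : V)

@[simp]
lemma addPendant_adj_some_some (u w : V) :
    (addPendant G x).Adj (some u) (some w) ↔ G.Adj u w := by
  simp only [addPendant, SimpleGraph.fromRel_adj, ne_eq, Option.some.injEq, reduceCtorEq,
    false_and, or_false, exists_and_left, exists_eq_left']
  exact ⟨fun h => h.2.elim id G.adj_symm, fun h => ⟨h.ne, Or.inl h⟩⟩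

@[simp]
lemma addPendant_adj_none (a : Option V) :
    (addPendant G x).Adj none a ↔ a = some x := by
  cases a <;> simp [addPendant]

@[simp]
lemma addPendant_adj_some_none (a : V) :
    (addPendant G x).Adj (some a) none ↔ a = x := by
  rw [SimpleGraph.adj_comm, addPendant_adj_none, Option.some.injEq]

lemma N2_disjoint_neighborSet : Disjoint (N2 G x) (G.neighborSet x) :=
  Set.disjoint_left.mpr fun _ hdist hadj =>
    absurd (SimpleGraph.dist_eq_one_iff_adj.mpr hadj) (by simp_all [N2])

variable {G x}

lemma IndepSet.not_adj_of_dominates {S S' : Set V} (hS'i : IndepSet G S') (hsub : S ⊆ S')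
    (hdisj : Disjoint S (G.neighborSet x)) (hdom : G.neighborSet x ⊆ ClosedNbhd G S) :
    ∀ s ∈ S', ¬ G.Adj x s := by
  intro s hs hadj
  rcases hdom hadj with hsS | ⟨t, ht, hts⟩
  · exact Set.disjoint_left.mp hdisj hsS hadj
  · exact hS'i (hsub ht) hs hts

lemma IndepSet.preimage_some {T : Set (Option V)} (hT : IndepSet (addPendant G x) T) :
    IndepSet G (some ⁻¹' T) :=
  fun _ ha _ hb hab => hT ha hb ((addPendant_adj_some_some G x _ _).mpr hab)

lemma IndepSet.image_some_union_some {S : Set V} (hS : IndepSet G S)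
    (hx : ∀ s ∈ S, ¬ G.Adj x s) : IndepSet (addPendant G x) (some '' S ∪ {some x}) := by
  rintro _ (⟨s, hs, rfl⟩ | rfl) _ (⟨t, ht, rfl⟩ | rfl) hadj <;>
    simp only [addPendant_adj_some_some] at hadj
  · exact hS hs ht hadj
  · exact hx s hs hadj.symm
  · exact hx t ht hadj
  · exact G.irrefl hadj

lemma IndepSet.image_some_union_none {S : Set V} (hS : IndepSet G S) (hxS : x ∉ S) :
    IndepSet (addPendant G x) (some '' S ∪ {none}) := by
  rintro _ (⟨s, hs, rfl⟩ | rfl) _ (⟨t, ht, rfl⟩ | rfl) hadj <;>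
    simp only [addPendant_adj_some_some, addPendant_adj_none, addPendant_adj_some_none,
      Option.some.injEq, reduceCtorEq] at hadj
  · exact hS hs ht hadj
  · exact hxS (hadj ▸ hs)
  · exact hxS (hadj ▸ ht)

lemma mem_of_some_mem_of_maximal {S : Set V} (hxS : x ∉ S)
    (hmax : ∀ T : Set V, x ∉ T → IndepSet G T → S ⊆ T → S = T)
    {T : Set (Option V)} (hT : IndepSet (addPendant G x) T) (hST : some '' S ⊆ T)
    {v : V} (hv : some v ∈ T) (hvx : v ≠ x) : v ∈ S := by
  have hSeq : S = some ⁻¹' T \ {x} :=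
    hmax _ (fun h => h.2 rfl) (fun _ ha _ hb => hT.preimage_some ha.1 hb.1)
      fun s hs => ⟨hST ⟨s, hs, rfl⟩, fun h => hxS (h ▸ hs)⟩
  rw [hSeq]
  exact ⟨hv, hvx⟩

lemma maxIndepSet_image_some_union_some {S : Set V} (hxS : x ∉ S)
    (hmax : ∀ T : Set V, x ∉ T → IndepSet G T → S ⊆ T → S = T)
    (hS : IndepSet (addPendant G x) (some '' S ∪ {some x})) :
    MaxIndepSet (addPendant G x) (some '' S ∪ {some x}) := by
  refine ⟨hS, fun T hT hST => hST.antisymm fun a ha => ?_⟩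
  rcases a with _ | v
  · exact absurd ((addPendant_adj_none G x _).mpr rfl) (hT ha (hST (Or.inr rfl)))
  · by_cases hvx : v = x
    · exact Or.inr (by rw [hvx]; rfl)
    · exact Or.inl ⟨v, mem_of_some_mem_of_maximal hxS hmax hT
        (Set.subset_union_left.trans hST) ha hvx, rfl⟩

lemma maxIndepSet_image_some_union_none {S : Set V} (hxS : x ∉ S)
    (hmax : ∀ T : Set V, x ∉ T → IndepSet G T → S ⊆ T → S = T)
    (hS : IndepSet (addPendant G x) (some '' S ∪ {none})) :
    MaxIndepSet (addPendant G x) (some '' S ∪ {none}) := by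
  refine ⟨hS, fun T hT hST => hST.antisymm fun a ha => ?_⟩
  rcases a with _ | v
  · exact Or.inr rfl
  · by_cases hvx : v = x
    · subst hvx
      exact absurd ((addPendant_adj_none G v _).mpr rfl) (hT (hST (Or.inr rfl)) ha)
    · exact Or.inl ⟨v, mem_of_some_mem_of_maximal hxS hmax hT
        (Set.subset_union_left.trans hST) ha hvx, rfl⟩

end addPendant

theorem pendant_witness_maximal_general (G : SimpleGraph V) (x : V)
    (S : Set V) (hS2 : S ⊆ N2 G x)
    (hdom : G.neighborSet x ⊆ ClosedNbhd G S)
    (S' : Set V) (hsub : S ⊆ S') (hxS' : x ∉ S') (hS'i : IndepSet G S')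
    (hmax : ∀ T : Set V, x ∉ T → IndepSet G T → S' ⊆ T → S' = T) :
    MaxIndepSet (addPendant G x) ((some '' S') ∪ {some x}) ∧
    MaxIndepSet (addPendant G x) ((some '' S') ∪ {none}) := by
  have hnadj : ∀ s ∈ S', ¬ G.Adj x s :=
    hS'i.not_adj_of_dominates hsub ((N2_disjoint_neighborSet G x).mono_left hS2) hdom
  exact ⟨maxIndepSet_image_some_union_some hxS' hmax (hS'i.image_some_union_some hnadj),
    maxIndepSet_image_some_union_none hxS' hmax (hS'i.image_some_union_none hxS')⟩

theorem pendant_witness_maximal [Fintype V] (G : SimpleGraph V) (x : V)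
    (S : Set V) (hS2 : S ⊆ N2 G x) (hSi : IndepSet G S)
    (hdom : G.neighborSet x ⊆ ClosedNbhd G S)
    (S' : Set V) (hsub : S ⊆ S') (hxS' : x ∉ S') (hS'i : IndepSet G S')
    (hmax : ∀ T : Set V, x ∉ T → IndepSet G T → S' ⊆ T → S' = T) :
    MaxIndepSet (addPendant G x) ((some '' S') ∪ {some x}) ∧
    MaxIndepSet (addPendant G x) ((some '' S') ∪ {none}) :=
  pendant_witness_maximal_general G x S hS2 hdom S' hsub hxS' hS'i hmax
end
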